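/- If every entry of a nonnegative circulation w on a finite directed graph is an integer, then w is a finite sum of characteristic vectors of directed cycles (with positive integer multiplicities). -/

import Mathlib

/-!
Repeatedly peel off a directed cycle. By conservation, every edge of positive weight is followed
by another edge of positive weight, so in the finite set of such edges a chosen successor map has
a periodic point, whose orbit is a directed cycle. Subtracting its characteristic vector keeps the
circulation nonnegative and integral while lowering the total weight, and we conclude by induction.
-/

open Finset

/-- An integer circulation on a finite directed graph: at each vertex, inflow
equals outflow. -/
def conservesInt {k n : ℕ} (src tgt : Fin k → Fin n) (w : Fin k → ℤ) : Prop :=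
  ∀ v : Fin n,
    ∑ e ∈ Finset.univ.filter (fun e => tgt e = v), w e =
      ∑ e ∈ Finset.univ.filter (fun e => src e = v), w e

theorem Function.exists_mem_periodicPts {α : Type*} [Finite α] [Nonempty α] (f : α → α) :
    ∃ x, x ∈ periodicPts f := by
  obtain ⟨x⟩ := ‹Nonempty α›
  obtain ⟨m, n, heq, hne⟩ : ∃ m n, f^[m] x = f^[n] x ∧ m ≠ n := by
    simpa [Function.Injective] using not_injective_infinite_finite (f^[·] x)
  wlog hlt : m < n generalizing m n
  · exact this n m heq.symm hne.symm (by omega)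
  refine ⟨f^[m] x, mk_mem_periodicPts (n := n - m) (by omega) ?_⟩
  rw [IsPeriodicPt, IsFixedPt, ← iterate_add_apply, Nat.sub_add_cancel hlt.le, heq]

theorem ZMod.val_add_one {n : ℕ} (i : ZMod (n + 1)) : (i + 1).val = (i.val + 1) % (n + 1) := by
  rw [ZMod.val_add, ZMod.val_one_eq_one_mod, Nat.add_mod_mod]

structure EdgeCycle {E V : Type*} (src tgt : E → V) where
  len : ℕ
  edge : ZMod (len + 1) → E
  injective : Function.Injective edge
  chain : ∀ i, tgt (edge i) = src (edge (i + 1))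

namespace EdgeCycle

variable {E V : Type*} {src tgt : E → V}

noncomputable def indicator (C : EdgeCycle src tgt) : E → ℤ :=
  (Set.range C.edge).indicator (fun _ => 1)

theorem indicator_nonneg (C : EdgeCycle src tgt) (e : E) : 0 ≤ C.indicator e :=
  Set.indicator_nonneg (fun _ _ => zero_le_one) e

theorem indicator_edge (C : EdgeCycle src tgt) (i : ZMod (C.len + 1)) :
    C.indicator (C.edge i) = 1 :=
  Set.indicator_of_mem (Set.mem_range_self i) _

theorem sum_filter_indicator [Fintype E] (C : EdgeCycle src tgt) (p : E → Prop)
    [DecidablePred p] : ∑ e with p e, C.indicator e = #{i | p (C.edge i)} := by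
  classical
  rw [indicator, sum_indicator_eq_sum_filter, sum_const, nsmul_eq_mul, mul_one, Nat.cast_inj,
    ← card_map ⟨C.edge, C.injective⟩]
  congr 1
  ext e
  simp only [mem_filter, mem_univ, true_and, mem_map, Function.Embedding.coeFn_mk, Set.mem_range]
  grind

theorem one_le_sum_indicator [Fintype E] (C : EdgeCycle src tgt) : 1 ≤ ∑ e, C.indicator e :=
  C.indicator_edge 0 ▸ single_le_sum (fun e _ => C.indicator_nonneg e) (mem_univ _)

theorem exists_range_subset_of_forall_exists_succ [Finite E] {S : Set E} (hS : S.Nonempty)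
    (hsucc : ∀ e ∈ S, ∃ e' ∈ S, src e' = tgt e) :
    ∃ C : EdgeCycle src tgt, Set.range C.edge ⊆ S := by
  choose g hgS hg using hsucc
  let next : S → S := fun e => ⟨g e e.2, hgS e e.2⟩
  have : Nonempty S := hS.to_subtype
  obtain ⟨x, hx⟩ := Function.exists_mem_periodicPts next
  obtain ⟨L, hL⟩ : ∃ L, Function.minimalPeriod next x = L + 1 :=
    Nat.exists_eq_add_one.mpr (Function.minimalPeriod_pos_of_mem_periodicPts hx)
  refine ⟨⟨L, fun i => (next^[i.val] x : E), ?_, fun i => ?_⟩, ?_⟩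
  · intro i j hij
    have hi : i.val < Function.minimalPeriod next x := by rw [hL]; exact i.val_lt
    have hj : j.val < Function.minimalPeriod next x := by rw [hL]; exact j.val_lt
    exact ZMod.val_injective _
      ((Function.iterate_eq_iterate_iff_of_lt_minimalPeriod hi hj).mp (Subtype.ext hij))
  · have hmod := Function.iterate_mod_minimalPeriod_eq (f := next) (x := x) (n := i.val + 1)
    rw [hL] at hmod
    rw [ZMod.val_add_one, hmod, Function.iterate_succ_apply']
    exact (hg _ _).symm
  · rintro _ ⟨i, rfl⟩
    exact Subtype.prop _

end EdgeCycle

section Circulation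

variable {k n : ℕ} {src tgt : Fin k → Fin n}

theorem conservesInt.sub {w w' : Fin k → ℤ} (hw : conservesInt src tgt w)
    (hw' : conservesInt src tgt w') : conservesInt src tgt (w - w') := by
  intro v
  simp only [Pi.sub_apply, sum_sub_distrib, hw v, hw' v]

theorem EdgeCycle.conservesInt_indicator (C : EdgeCycle src tgt) :
    conservesInt src tgt C.indicator := by
  intro v
  rw [C.sum_filter_indicator, C.sum_filter_indicator]
  simp_rw [C.chain]
  rw [card_filter, card_filter]
  exact_mod_cast Equiv.sum_comp (Equiv.addRight 1) (fun i => if src (C.edge i) = v then 1 else 0)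

theorem conservesInt.exists_pos_succ {w : Fin k → ℤ} (hnn : ∀ e, 0 ≤ w e)
    (hcons : conservesInt src tgt w) {e : Fin k} (he : 0 < w e) :
    ∃ e', 0 < w e' ∧ src e' = tgt e := by
  have hin : 0 < ∑ f with tgt f = tgt e, w f :=
    sum_pos' (fun f _ => hnn f) ⟨e, by simp, he⟩
  rw [hcons (tgt e)] at hin
  obtain ⟨e', he', hpos⟩ := exists_lt_of_sum_lt (f := fun _ => (0 : ℤ)) (by simpa using hin)
  exact ⟨e', hpos, (mem_filter.mp he').2⟩

theorem exists_edgeCycles_sum_eq (w : Fin k → ℤ) (hnn : ∀ e, 0 ≤ w e)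
    (hcons : conservesInt src tgt w) :
    ∃ (N : ℕ) (C : Fin N → EdgeCycle src tgt), w = ∑ a, (C a).indicator := by
  by_cases hzero : ∀ e, w e = 0
  · exact ⟨0, finZeroElim, funext fun e => by simp [hzero e]⟩
  push Not at hzero
  obtain ⟨e₀, he₀⟩ := hzero
  obtain ⟨C, hC⟩ := EdgeCycle.exists_range_subset_of_forall_exists_succ (S := {e | 0 < w e})
    ⟨e₀, (hnn e₀).lt_of_ne' he₀⟩
    fun e he => hcons.exists_pos_succ hnn he
  have hle : C.indicator ≤ w :=
    Set.indicator_le' (fun _ he => hC he) (fun e _ => hnn e)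
  have hdecr : (∑ e, (w - C.indicator) e).toNat < (∑ e, w e).toNat := by
    have hrest : 0 ≤ ∑ e, (w e - C.indicator e) := sum_nonneg fun e _ => sub_nonneg.mpr (hle e)
    have hcycle := C.one_le_sum_indicator
    simp only [Pi.sub_apply, sum_sub_distrib] at hrest ⊢
    omega
  obtain ⟨N, Cs, hCs⟩ := exists_edgeCycles_sum_eq (w - C.indicator)
    (fun e => sub_nonneg.mpr (hle e)) (hcons.sub C.conservesInt_indicator)
  refine ⟨N + 1, Fin.cons C Cs, ?_⟩
  rw [Fin.sum_univ_succ, Fin.cons_zero]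
  simp only [Fin.cons_succ, ← hCs, add_sub_cancel]
termination_by (∑ e, w e).toNat
decreasing_by exact hdecr

end Circulation

/-- Integer flow decomposition: a nonnegative integer circulation on a finite
directed graph is a finite sum of characteristic vectors of directed cycles
(each traversing an edge at most once), with positive integer
multiplicities. -/
theorem stmt_19 (k n : ℕ) (src tgt : Fin k → Fin n) (w : Fin k → ℤ)
    (hnn : ∀ e, 0 ≤ w e) (hcons : conservesInt src tgt w) :
    ∃ (N : ℕ) (m : Fin N → ℕ) (len : Fin N → ℕ)
      (c : (a : Fin N) → ZMod (len a + 1) → Fin k),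
      (∀ a, 0 < m a) ∧
      (∀ a, Function.Injective (c a)) ∧
      (∀ a i, tgt (c a i) = src (c a (i + 1))) ∧
      (∀ e, w e =
        ∑ a, (m a : ℤ) * (Set.range (c a)).indicator (fun _ => (1 : ℤ)) e) := by
  obtain ⟨N, C, hw⟩ := exists_edgeCycles_sum_eq w hnn hcons
  refine ⟨N, fun _ => 1, fun a => (C a).len, fun a => (C a).edge, fun _ => one_pos,
    fun a => (C a).injective, fun a => (C a).chain, fun e => ?_⟩
  simp [hw, EdgeCycle.indicator]
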